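/- Let Φ : {(v,u) ∈ ℂ² : v ≠ 0} → ℂ² be the Levi-Civita map Φ(v,u) = (2v², −u/conj(v)), and let Ω : ℂ² × ℂ² → ℝ be the standard symplectic bilinear form of the phase space ℂ_q × ℂ_p, given by Ω((δq,δp),(δq′,δp′)) = ⟨δp, δq′⟩ − ⟨δq, δp′⟩, where ⟨a,b⟩ = Re(a·conj(b)) denotes the real inner product on ℂ. Then Φ is smooth on its domain and there exists a nonzero real constant κ (namely κ = −4) such that for every (v,u) with v ≠ 0 and all ξ, η ∈ ℂ² one has Ω(DΦ(v,u)ξ, DΦ(v,u)η) = κ · Ω(ξ, η), where DΦ(v,u) denotes the real Fréchet derivative of Φ at (v,u); that is, the Levi-Civita coordinate change q = 2v², p = −u/conj(v) is symplectic up to a constant factor. -/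

import Mathlib

/-- The real inner product `⟨a,b⟩ = Re(a·conj b)` on `ℂ`. -/
noncomputable def rinner (a b : ℂ) : ℝ := (a * (starRingEnd ℂ) b).re

/-- The standard symplectic bilinear form on the phase space `ℂ_q × ℂ_p`:
`Ω((δq,δp),(δq′,δp′)) = ⟨δp,δq′⟩ − ⟨δq,δp′⟩`. -/
noncomputable def Omega (x y : ℂ × ℂ) : ℝ := rinner x.2 y.1 - rinner x.1 y.2

/-- The Levi-Civita map `Φ(v,u) = (2v², −u/ conj v)`. -/
noncomputable def leviCivita (vu : ℂ × ℂ) : ℂ × ℂ :=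
  (2 * vu.1 ^ 2, -vu.2 / (starRingEnd ℂ) vu.1)

/-- The value of the Fréchet derivative of the Levi-Civita map. -/
lemma leviCivita_fderiv_apply (vu : ℂ × ℂ) (h : vu.1 ≠ 0) (ξ : ℂ × ℂ) :
    fderiv ℝ leviCivita vu ξ =
      (4 * vu.1 * ξ.1,
        vu.2 * (starRingEnd ℂ) ξ.1 / ((starRingEnd ℂ) vu.1) ^ 2
          - ξ.2 / (starRingEnd ℂ) vu.1) := by
  have hc : (starRingEnd ℂ) vu.1 ≠ 0 := by simpa using h
  have hfst : HasFDerivAt (fun w : ℂ × ℂ => w.1)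
      (ContinuousLinearMap.fst ℝ ℂ ℂ) vu := hasFDerivAt_fst
  have hsnd : HasFDerivAt (fun w : ℂ × ℂ => w.2)
      (ContinuousLinearMap.snd ℝ ℂ ℂ) vu := hasFDerivAt_snd
  have h1 : HasFDerivAt (fun w : ℂ × ℂ => 2 * w.1 ^ 2)
      ((2:ℂ) • (vu.1 • ContinuousLinearMap.fst ℝ ℂ ℂ
        + vu.1 • ContinuousLinearMap.fst ℝ ℂ ℂ)) vu := by
    have := (hfst.mul hfst).const_mul (2:ℂ)
    simpa [pow_two] using this
  have hconj : HasFDerivAt (fun w : ℂ × ℂ => (starRingEnd ℂ) w.1)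
      (Complex.conjCLE.toContinuousLinearMap.comp (ContinuousLinearMap.fst ℝ ℂ ℂ)) vu :=
    (Complex.conjCLE.toContinuousLinearMap.hasFDerivAt).comp vu hfst
  have hinv : HasFDerivAt (fun z : ℂ => z⁻¹)
      (((ContinuousLinearMap.smulRight (1 : ℂ →L[ℂ] ℂ)
        (-(((starRingEnd ℂ) vu.1) ^ 2)⁻¹)).restrictScalars ℝ)) ((starRingEnd ℂ) vu.1) :=
    ((hasDerivAt_inv hc).hasFDerivAt).restrictScalars ℝ
  have h3 := hinv.comp vu hconj
  have h2 := (hsnd.neg.mul h3)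
  have hL : HasFDerivAt leviCivita _ vu := h1.prodMk h2
  rw [hL.fderiv]
  simp [div_eq_mul_inv]
  constructor <;> ring

/-- The Levi-Civita coordinate change `q = 2v²`, `p = −u/conj v` is smooth away
from `v = 0` and is symplectic up to the constant factor `κ = −4`. -/
theorem leviCivita_symplectic_up_to_constant :
    (∀ vu : ℂ × ℂ, vu.1 ≠ 0 → ContDiffAt ℝ (⊤ : ℕ∞) leviCivita vu) ∧
    ∃ κ : ℝ, κ ≠ 0 ∧ κ = -4 ∧
      ∀ vu : ℂ × ℂ, vu.1 ≠ 0 → ∀ ξ η : ℂ × ℂ,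
        Omega (fderiv ℝ leviCivita vu ξ) (fderiv ℝ leviCivita vu η)
          = κ * Omega ξ η := by
  constructor
  · intro vu h
    have hc : (starRingEnd ℂ) vu.1 ≠ 0 := by simpa using h
    have h1 : ContDiffAt ℝ (⊤ : ℕ∞) (fun w : ℂ × ℂ => w.1) vu := contDiffAt_fst
    have h2 : ContDiffAt ℝ (⊤ : ℕ∞) (fun w : ℂ × ℂ => w.2) vu := contDiffAt_snd
    have h3 : ContDiffAt ℝ (⊤ : ℕ∞) (fun w : ℂ × ℂ => (starRingEnd ℂ) w.1) vu :=
      (Complex.conjCLE.toContinuousLinearMap.contDiff.comp contDiff_fst).contDiffAt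
    have h4 : ContDiffAt ℝ (⊤ : ℕ∞) (fun w : ℂ × ℂ => ((starRingEnd ℂ) w.1)⁻¹) vu :=
      ((contDiffAt_inv ℂ hc).restrict_scalars ℝ).comp vu h3
    have h5 : ContDiffAt ℝ (⊤ : ℕ∞) (fun w : ℂ × ℂ => -w.2 / (starRingEnd ℂ) w.1) vu := by
      simpa [div_eq_mul_inv] using h2.neg.mul h4
    exact (contDiffAt_const.mul (h1.pow 2)).prodMk h5
  · refine ⟨-4, by norm_num, rfl, ?_⟩
    intro vu h ξ η
    have hc : (starRingEnd ℂ) vu.1 ≠ 0 := by simpa using h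
    rw [leviCivita_fderiv_apply vu h ξ, leviCivita_fderiv_apply vu h η]
    set v := vu.1
    set u := vu.2
    set c := (starRingEnd ℂ) v with hcdef
    set T : ℂ := 4 * u * (starRingEnd ℂ) ξ.1 * (starRingEnd ℂ) η.1 / c with hT
    have hA : (u * (starRingEnd ℂ) ξ.1 / c ^ 2 - ξ.2 / c) * (starRingEnd ℂ) (4 * v * η.1)
        = -(4 * (ξ.2 * (starRingEnd ℂ) η.1)) + T := by
      rw [hT]
      simp only [map_mul, map_ofNat, hcdef]
      have hc' : (starRingEnd ℂ) v ≠ 0 := hc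
      field_simp
      ring
    have hB : 4 * v * ξ.1 * (starRingEnd ℂ) (u * (starRingEnd ℂ) η.1 / c ^ 2 - η.2 / c)
        = -(4 * (ξ.1 * (starRingEnd ℂ) η.2)) + (starRingEnd ℂ) T := by
      rw [hT]
      simp only [map_sub, map_div₀, map_mul, map_pow, map_ofNat, Complex.conj_conj, hcdef]
      field_simp
      ring
    simp only [Omega, rinner]
    rw [hA, hB]
    simp only [Complex.add_re, Complex.neg_re, Complex.conj_re, Complex.mul_re,
      Complex.conj_im, Complex.re_ofNat, Complex.im_ofNat]
    ring
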